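/- arXiv:1102.4478 — 2 statements merged into one kernel-verified Lean document; each statement's English description precedes it below -/
import Mathlib

section
/- Let γ : ℝ → ℝ² be a C^∞ regular curve with a generic inflection point at t = 0, and assume [γ'(t), γ''(t)] ≠ 0 for all t ≠ 0 near 0. Then there exists a C^∞ function F on a neighborhood of 0 such that F(t) = s_A(t)²·κ_A(t) for all t ≠ 0 near 0, and F(0) = −5/16; in particular lim_{t→0} s_A(t)²·κ_A(t) = −5/16. -/
noncomputable section
open Real Set Filter Topology

/-- The determinant `[a, b] = a₁b₂ − a₂b₁` of two vectors in the plane. -/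
def det2 (a b : ℝ × ℝ) : ℝ := a.1 * b.2 - a.2 * b.1

/-- The Euclidean norm on `ℝ × ℝ`. -/
def enorm2 (a : ℝ × ℝ) : ℝ := Real.sqrt (a.1 ^ 2 + a.2 ^ 2)

/-- The Euclidean arclength parameter of `γ` based at `0`. -/
def sG (γ : ℝ → ℝ × ℝ) (t : ℝ) : ℝ := ∫ u in (0:ℝ)..t, enorm2 (deriv γ u)

/-- The affine arclength parameter of `γ` based at `0`. -/
def sA (γ : ℝ → ℝ × ℝ) (t : ℝ) : ℝ :=
  ∫ u in (0:ℝ)..t, |det2 (deriv γ u) (iteratedDeriv 2 γ u)| ^ ((1:ℝ)/3)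

/-- The Euclidean curvature `κ_g = [γ', γ'']/‖γ'‖³`. -/
def kappaG (γ : ℝ → ℝ × ℝ) (t : ℝ) : ℝ :=
  det2 (deriv γ t) (iteratedDeriv 2 γ t) / enorm2 (deriv γ t) ^ 3

/-- The affine curvature `κ_A`. -/
def kappaA (γ : ℝ → ℝ × ℝ) (t : ℝ) : ℝ :=
  (3 * det2 (deriv γ t) (iteratedDeriv 2 γ t) * det2 (deriv γ t) (iteratedDeriv 4 γ t)
    + 12 * det2 (deriv γ t) (iteratedDeriv 2 γ t)
        * det2 (iteratedDeriv 2 γ t) (iteratedDeriv 3 γ t)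
    - 5 * det2 (deriv γ t) (iteratedDeriv 3 γ t) ^ 2)
  / (9 * |det2 (deriv γ t) (iteratedDeriv 2 γ t)| ^ ((8:ℝ)/3))

/-- `γ` has a 3/2-cusp at `t = 0`. -/
def HasCusp (γ : ℝ → ℝ × ℝ) : Prop :=
  deriv γ 0 = 0 ∧ det2 (iteratedDeriv 2 γ 0) (iteratedDeriv 3 γ 0) ≠ 0

/-- The Euclidean cuspidal curvature at a 3/2-cusp `t = 0`. -/
def muG (γ : ℝ → ℝ × ℝ) : ℝ :=
  det2 (iteratedDeriv 2 γ 0) (iteratedDeriv 3 γ 0) / enorm2 (iteratedDeriv 2 γ 0) ^ ((5:ℝ)/2)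

/-- The affine cuspidal curvature at a 3/2-cusp `t = 0`. -/
def muA (γ : ℝ → ℝ × ℝ) : ℝ :=
  (24 * det2 (iteratedDeriv 2 γ 0) (iteratedDeriv 3 γ 0)
      * det2 (iteratedDeriv 2 γ 0) (iteratedDeriv 5 γ 0)
   + 60 * det2 (iteratedDeriv 2 γ 0) (iteratedDeriv 3 γ 0)
      * det2 (iteratedDeriv 3 γ 0) (iteratedDeriv 4 γ 0)
   - 35 * det2 (iteratedDeriv 2 γ 0) (iteratedDeriv 4 γ 0) ^ 2)
  / |det2 (iteratedDeriv 2 γ 0) (iteratedDeriv 3 γ 0)| ^ ((12:ℝ)/5)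

/-- `γ` (regular at `0`) has a generic inflection point at `t = 0`. -/
def HasGenericInflection (γ : ℝ → ℝ × ℝ) : Prop :=
  deriv γ 0 ≠ 0 ∧ det2 (deriv γ 0) (iteratedDeriv 2 γ 0) = 0 ∧
    det2 (deriv γ 0) (iteratedDeriv 3 γ 0) ≠ 0

/-- The affine inflectional curvature at a generic inflection point `t = 0`. -/
def muI (γ : ℝ → ℝ × ℝ) : ℝ :=
  Real.sign (det2 (deriv γ 0) (iteratedDeriv 3 γ 0)) *
    (det2 (deriv γ 0) (iteratedDeriv 4 γ 0)
      - 6 * det2 (iteratedDeriv 2 γ 0) (iteratedDeriv 3 γ 0))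
  / |det2 (deriv γ 0) (iteratedDeriv 3 γ 0)| ^ ((5:ℝ)/4)

/-- The affine map `x ↦ Ax + v` on the plane, with `A = (a b; c d)`. -/
def applyAff (a b c d : ℝ) (v : ℝ × ℝ) (p : ℝ × ℝ) : ℝ × ℝ :=
  (a * p.1 + b * p.2 + v.1, c * p.1 + d * p.2 + v.2)

/-! At a generic inflection, `D := [γ', γ'']` vanishes at `0` with `D' = [γ', γ''']` and
`D'(0) = c ≠ 0`, so `D(t) = t E(t)` with `E(t) = ∫₀¹ D'(tv) dv` smooth and `E(0) = c`.
The substitution `u = tv` in the affine arclength gives `s_A(t) = t |t|^{1/3} Φ(t)` with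
`Φ(t) = ∫₀¹ v^{1/3} |E(tv)|^{1/3} dv`, smooth near `0` because `E ≠ 0` there, while
`|D|^{8/3} = |t|^{8/3} |E|^{8/3}`. The factors `|t|^{8/3}` cancel in `s_A² κ_A`, leaving
`Φ² N / (9 |E|^{8/3})` with `N` the numerator of `κ_A`. At `t = 0`,
`Φ(0) = (3/4) |c|^{1/3}` and `N(0) = -5c²`, which gives `-5/16`. -/

open MeasureTheory intervalIntegral
open scoped ContDiff Interval

theorem mul_mem_Ioo_neg_of_mem_Icc {c y v : ℝ} (hy : y ∈ Ioo (-c) c) (hv : v ∈ Icc (0:ℝ) 1) :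
    y * v ∈ Ioo (-c) c := by
  refine abs_lt.1 ?_
  rw [abs_mul, abs_of_nonneg hv.1]
  exact (mul_le_of_le_one_right (abs_nonneg y) hv.2).trans_lt (abs_lt.2 hy)

theorem eq_mul_integral_comp_mul_of_hasDerivAt {E : Type*} [NormedAddCommGroup E]
    [NormedSpace ℝ E] [CompleteSpace E] {f f' : ℝ → E} (hf : ∀ x, HasDerivAt f (f' x) x)
    (hf' : Continuous f') (h0 : f 0 = 0) (t : ℝ) :
    f t = t • ∫ v in (0:ℝ)..1, f' (t * v) := by
  rw [smul_integral_comp_mul_left, mul_zero, mul_one,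
    integral_eq_sub_of_hasDerivAt (fun x _ => hf x) (hf'.intervalIntegrable _ _), h0, sub_zero]

theorem integral_abs_rpow_mul_eq (p : ℝ) (q : ℝ → ℝ) (t : ℝ) :
    ∫ u in (0:ℝ)..t, |u| ^ p * q u = t * |t| ^ p * ∫ v in (0:ℝ)..1, v ^ p * q (t * v) := by
  have hsub := smul_integral_comp_mul_left (fun u => |u| ^ p * q u) t (a := 0) (b := 1)
  rw [mul_zero, mul_one, smul_eq_mul] at hsub
  rw [← hsub, mul_assoc, ← intervalIntegral.integral_const_mul (|t| ^ p)]
  congr 1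
  refine intervalIntegral.integral_congr fun v hv => ?_
  rw [uIcc_of_le zero_le_one] at hv
  rw [abs_mul, Real.mul_rpow (abs_nonneg t) (abs_nonneg v), abs_of_nonneg hv.1, mul_assoc]

section IntegralMulCompMul

variable {w h : ℝ → ℝ} {b : ℝ}

theorem continuousOn_mul_comp_mul (hw : Continuous w) (hh : ContinuousOn h (Ioo (-b) b))
    {y : ℝ} (hy : y ∈ Ioo (-b) b) :
    ContinuousOn (fun v => w v * h (y * v)) (Icc 0 1) :=
  hw.continuousOn.mul (hh.comp (continuousOn_const.mul continuousOn_id)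
    fun _ hv => mul_mem_Ioo_neg_of_mem_Icc hy hv)

theorem hasDerivAt_integral_mul_comp_mul (hw : Continuous w)
    (hh : ContDiffOn ℝ 1 h (Ioo (-b) b)) {x : ℝ} (hx : x ∈ Ioo (-b) b) :
    HasDerivAt (fun t => ∫ v in (0:ℝ)..1, w v * h (t * v))
      (∫ v in (0:ℝ)..1, (w v * v) * deriv h (x * v)) x := by
  set c := (|x| + b) / 2 with hc
  have hxb : |x| < b := abs_lt.2 hx
  have hxc : x ∈ Ioo (-c) c := abs_lt.1 (by linarith)
  have hcb : Icc (-c) c ⊆ Ioo (-b) b := Icc_subset_Ioo (by linarith) (by linarith)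
  have hcb' : Ioo (-c) c ⊆ Ioo (-b) b := Ioo_subset_Icc_self.trans hcb
  have hh' : ContinuousOn (deriv h) (Ioo (-b) b) :=
    hh.continuousOn_deriv_of_isOpen isOpen_Ioo le_rfl
  obtain ⟨C, hC⟩ := isCompact_Icc.exists_bound_of_continuousOn (hh'.mono hcb)
  obtain ⟨W, hW⟩ := isCompact_Icc.exists_bound_of_continuousOn (hw.continuousOn (s := Icc 0 1))
  have hW0 : 0 ≤ W := (norm_nonneg _).trans (hW 0 ⟨le_rfl, zero_le_one⟩)
  have huIoc : Ι (0:ℝ) 1 ⊆ Icc 0 1 := by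
    rw [uIoc_of_le zero_le_one]; exact Ioc_subset_Icc_self
  have hmeas : ∀ y ∈ Ioo (-b) b, ∀ g : ℝ → ℝ, ContinuousOn g (Ioo (-b) b) →
      ∀ u : ℝ → ℝ, Continuous u →
      AEStronglyMeasurable (fun v => u v * g (y * v)) (volume.restrict (Ι (0:ℝ) 1)) :=
    fun y hy g hg u hu =>
      ((continuousOn_mul_comp_mul hu hg hy).mono huIoc).aestronglyMeasurable measurableSet_uIoc
  refine (intervalIntegral.hasDerivAt_integral_of_dominated_loc_of_deriv_le (μ := volume)
    (F := fun t v => w v * h (t * v)) (F' := fun y v => w v * v * deriv h (y * v))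
    (bound := fun _ => W * C)
    (isOpen_Ioo.mem_nhds hxc) ?_ ?_ ?_ ?_ intervalIntegrable_const ?_).2
  · filter_upwards [isOpen_Ioo.mem_nhds hx] with y hy
    exact hmeas y hy h hh.continuousOn w hw
  · exact (continuousOn_mul_comp_mul hw hh.continuousOn hx).intervalIntegrable_of_Icc zero_le_one
  · exact hmeas x hx (deriv h) hh' _ (hw.mul continuous_id)
  · refine ae_of_all _ fun v hv y hy => ?_
    have hv' := huIoc hv
    calc ‖w v * v * deriv h (y * v)‖ = ‖w v‖ * ‖v‖ * ‖deriv h (y * v)‖ := by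
          simp only [norm_mul]
      _ ≤ W * 1 * C := by
          gcongr
          · exact hW v hv'
          · rw [Real.norm_of_nonneg hv'.1]; exact hv'.2
          · exact hC _ (Ioo_subset_Icc_self (mul_mem_Ioo_neg_of_mem_Icc hy hv'))
      _ = W * C := by ring
  · refine ae_of_all _ fun v hv y hy => ?_
    have hyv := hcb' (mul_mem_Ioo_neg_of_mem_Icc hy (huIoc hv))
    have hd : HasDerivAt h (deriv h (y * v)) (y * v) :=
      ((hh.differentiableOn one_ne_zero).differentiableAt (isOpen_Ioo.mem_nhds hyv)).hasDerivAt
    exact ((hd.comp y (hasDerivAt_mul_const v)).const_mul (w v)).congr_deriv (by ring)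

theorem contDiffOn_integral_mul_comp_mul (hw : Continuous w)
    (hh : ContDiffOn ℝ ∞ h (Ioo (-b) b)) :
    ContDiffOn ℝ ∞ (fun t => ∫ v in (0:ℝ)..1, w v * h (t * v)) (Ioo (-b) b) := by
  -- differentiating under the integral replaces `(w, h)` by `(v ↦ w v * v, deriv h)`
  suffices ∀ n : ℕ, ∀ w h : ℝ → ℝ, Continuous w → ContDiffOn ℝ ∞ h (Ioo (-b) b) →
      ContDiffOn ℝ n (fun t => ∫ v in (0:ℝ)..1, w v * h (t * v)) (Ioo (-b) b) from
    contDiffOn_infty.2 fun n => this n w h hw hh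
  intro n
  induction n with
  | zero =>
    intro w h hw hh
    exact contDiffOn_zero.2 fun x hx => (hasDerivAt_integral_mul_comp_mul hw
      (hh.of_le (by simp)) hx).continuousAt.continuousWithinAt
  | succ n ih =>
    intro w h hw hh
    have hderiv := fun x (hx : x ∈ Ioo (-b) b) =>
      hasDerivAt_integral_mul_comp_mul hw (hh.of_le (by simp)) hx
    rw [Nat.cast_succ, contDiffOn_succ_iff_deriv_of_isOpen isOpen_Ioo]
    refine ⟨fun x hx => (hderiv x hx).differentiableAt.differentiableWithinAt, by simp, ?_⟩
    exact (ih _ _ (hw.mul continuous_id) (hh.deriv_of_isOpen isOpen_Ioo (by simp))).congr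
      fun x hx => (hderiv x hx).deriv

end IntegralMulCompMul

theorem HasDerivAt.det2 {f g : ℝ → ℝ × ℝ} {f' g' : ℝ × ℝ} {t : ℝ}
    (hf : HasDerivAt f f' t) (hg : HasDerivAt g g' t) :
    HasDerivAt (fun s => det2 (f s) (g s)) (det2 f' (g t) + det2 (f t) g') t := by
  have hf₁ : HasDerivAt (fun s => (f s).1) f'.1 t := by simpa using hf.hasFDerivAt.fst.hasDerivAt
  have hf₂ : HasDerivAt (fun s => (f s).2) f'.2 t := by simpa using hf.hasFDerivAt.snd.hasDerivAt
  have hg₁ : HasDerivAt (fun s => (g s).1) g'.1 t := by simpa using hg.hasFDerivAt.fst.hasDerivAt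
  have hg₂ : HasDerivAt (fun s => (g s).2) g'.2 t := by simpa using hg.hasFDerivAt.snd.hasDerivAt
  exact ((hf₁.mul hg₂).sub (hf₂.mul hg₁)).congr_deriv (by simp only [_root_.det2]; ring)

theorem ContDiff.det2 {n : WithTop ℕ∞} {f g : ℝ → ℝ × ℝ} (hf : ContDiff ℝ n f)
    (hg : ContDiff ℝ n g) : ContDiff ℝ n (fun s => det2 (f s) (g s)) :=
  (hf.fst.mul hg.snd).sub (hf.snd.mul hg.fst)

theorem ContDiff.contDiff_iteratedDeriv {F : Type*} [NormedAddCommGroup F] [NormedSpace ℝ F]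
    {f : ℝ → F} (hf : ContDiff ℝ ∞ f) (n : ℕ) :
    ContDiff ℝ ∞ (iteratedDeriv n f) := by
  rw [iteratedDeriv_eq_iterate]; exact hf.iterate_deriv n

theorem ContDiff.hasDerivAt_iteratedDeriv {F : Type*} [NormedAddCommGroup F] [NormedSpace ℝ F]
    {f : ℝ → F} (hf : ContDiff ℝ ∞ f) (n : ℕ) (t : ℝ) :
    HasDerivAt (iteratedDeriv n f) (iteratedDeriv (n + 1) f t) t := by
  rw [iteratedDeriv_succ]
  exact (hf.differentiable_iteratedDeriv n (mod_cast ENat.natCast_lt_top n) t).hasDerivAt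

def det12 (γ : ℝ → ℝ × ℝ) (t : ℝ) : ℝ := det2 (deriv γ t) (iteratedDeriv 2 γ t)

def det13 (γ : ℝ → ℝ × ℝ) (t : ℝ) : ℝ := det2 (deriv γ t) (iteratedDeriv 3 γ t)

/-- `det12 γ t / t`, written so that it is smooth through `t = 0` when `det12 γ 0 = 0`. -/
def det12Div (γ : ℝ → ℝ × ℝ) (t : ℝ) : ℝ := ∫ v in (0:ℝ)..1, det13 γ (t * v)

/-- `sA γ t / (t |t|^{1/3})` when `det12 γ 0 = 0`. -/
def sAQuot (γ : ℝ → ℝ × ℝ) (t : ℝ) : ℝ :=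
  ∫ v in (0:ℝ)..1, v ^ ((1:ℝ)/3) * |det12Div γ (t * v)| ^ ((1:ℝ)/3)

def kappaANum (γ : ℝ → ℝ × ℝ) (t : ℝ) : ℝ :=
  3 * det12 γ t * det2 (deriv γ t) (iteratedDeriv 4 γ t)
    + 12 * det12 γ t * det2 (iteratedDeriv 2 γ t) (iteratedDeriv 3 γ t)
    - 5 * det13 γ t ^ 2

def sASqKappaA (γ : ℝ → ℝ × ℝ) (t : ℝ) : ℝ :=
  sAQuot γ t ^ 2 * kappaANum γ t / (9 * |det12Div γ t| ^ ((8:ℝ)/3))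

section Curve

variable {γ : ℝ → ℝ × ℝ}

theorem kappaA_eq_kappaANum_div (t : ℝ) :
    kappaA γ t = kappaANum γ t / (9 * |det12 γ t| ^ ((8:ℝ)/3)) := rfl

theorem hasDerivAt_det12 (hγ : ContDiff ℝ ∞ γ) (t : ℝ) :
    HasDerivAt (det12 γ) (det13 γ t) t := by
  have h₁ := hγ.hasDerivAt_iteratedDeriv 1 t
  rw [iteratedDeriv_one] at h₁
  refine (h₁.det2 (hγ.hasDerivAt_iteratedDeriv 2 t)).congr_deriv ?_
  simp only [det13, _root_.det2]; ring

theorem contDiff_det13 (hγ : ContDiff ℝ ∞ γ) : ContDiff ℝ ∞ (det13 γ) := by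
  have h := (hγ.contDiff_iteratedDeriv 1).det2 (hγ.contDiff_iteratedDeriv 3)
  rw [iteratedDeriv_one] at h
  exact h

theorem det12_eq_mul_det12Div (hγ : ContDiff ℝ ∞ γ) (h0 : det12 γ 0 = 0) (t : ℝ) :
    det12 γ t = t * det12Div γ t :=
  eq_mul_integral_comp_mul_of_hasDerivAt (hasDerivAt_det12 hγ) (contDiff_det13 hγ).continuous h0 t

theorem det12Div_zero : det12Div γ 0 = det13 γ 0 := by
  simp [det12Div]

theorem contDiffOn_det12Div (hγ : ContDiff ℝ ∞ γ) (b : ℝ) :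
    ContDiffOn ℝ ∞ (det12Div γ) (Ioo (-b) b) := by
  have h := contDiffOn_integral_mul_comp_mul (w := fun _ => 1) (b := b) continuous_const
    (contDiff_det13 hγ).contDiffOn
  simp only [one_mul] at h
  exact h

theorem sA_eq_mul_sAQuot (hγ : ContDiff ℝ ∞ γ) (h0 : det12 γ 0 = 0) (t : ℝ) :
    sA γ t = t * |t| ^ ((1:ℝ)/3) * sAQuot γ t := by
  rw [sA, sAQuot, ← integral_abs_rpow_mul_eq _ fun u => |det12Div γ u| ^ ((1:ℝ)/3)]
  refine intervalIntegral.integral_congr fun u _ => ?_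
  rw [← det12, det12_eq_mul_det12Div hγ h0, abs_mul, Real.mul_rpow (abs_nonneg _) (abs_nonneg _)]

theorem sAQuot_zero : sAQuot γ 0 = 3/4 * |det13 γ 0| ^ ((1:ℝ)/3) := by
  simp only [sAQuot, zero_mul, det12Div_zero]
  rw [intervalIntegral.integral_mul_const, integral_rpow (Or.inl (by norm_num)),
    Real.one_rpow, Real.zero_rpow (by norm_num)]
  norm_num

theorem sASqKappaA_eq (hγ : ContDiff ℝ ∞ γ) (h0 : det12 γ 0 = 0) {t : ℝ} (ht : t ≠ 0) :
    sASqKappaA γ t = sA γ t ^ 2 * kappaA γ t := by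
  rw [sASqKappaA, kappaA_eq_kappaANum_div, sA_eq_mul_sAQuot hγ h0, det12_eq_mul_det12Div hγ h0,
    abs_mul, Real.mul_rpow (abs_nonneg _) (abs_nonneg _)]
  set a := |t| ^ ((1:ℝ)/3) with ha
  have ht3 : t ^ 2 = a ^ 6 := by
    rw [← sq_abs, ← Real.rpow_inv_natCast_pow (abs_nonneg t) three_ne_zero, ha]
    norm_num; ring
  have ht83 : |t| ^ ((8:ℝ)/3) = a ^ 8 := by
    rw [ha, ← Real.rpow_mul_natCast (abs_nonneg t)]; norm_num
  have ha0 : a ≠ 0 := (Real.rpow_pos_of_pos (abs_pos.2 ht) _).ne'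
  rw [ht83]
  by_cases hE : |det12Div γ t| ^ ((8:ℝ)/3) = 0
  · simp [hE]
  · field_simp
    rw [ht3]

theorem sASqKappaA_zero (h0 : det12 γ 0 = 0) (hc : det13 γ 0 ≠ 0) :
    sASqKappaA γ 0 = -(5/16) := by
  set a := |det13 γ 0| ^ ((1:ℝ)/3)
  have ha : 0 < a := Real.rpow_pos_of_pos (abs_pos.2 hc) _
  have hc6 : det13 γ 0 ^ 2 = a ^ 6 := by
    rw [← sq_abs, ← Real.rpow_inv_natCast_pow (abs_nonneg _) three_ne_zero]
    norm_num [a]; ring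
  have hc83 : |det13 γ 0| ^ ((8:ℝ)/3) = a ^ 8 := by
    rw [← Real.rpow_mul_natCast (abs_nonneg _)]; norm_num
  rw [sASqKappaA, sAQuot_zero, kappaANum, h0, det12Div_zero, hc83, hc6]
  field_simp
  ring

theorem contDiffOn_sASqKappaA (hγ : ContDiff ℝ ∞ γ) {ε : ℝ}
    (hE : ∀ t ∈ Ioo (-ε) ε, det12Div γ t ≠ 0) :
    ContDiffOn ℝ ∞ (sASqKappaA γ) (Ioo (-ε) ε) := by
  have hE' : ∀ t ∈ Ioo (-ε) ε, |det12Div γ t| ≠ 0 := fun t ht => abs_ne_zero.2 (hE t ht)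
  have habs := (contDiffOn_det12Div hγ ε).abs hE
  have hquot : ContDiffOn ℝ ∞ (sAQuot γ) (Ioo (-ε) ε) :=
    contDiffOn_integral_mul_comp_mul (continuous_id.rpow_const fun _ => Or.inr (by norm_num))
      (habs.rpow_const_of_ne hE')
  have hnum : ContDiff ℝ ∞ (kappaANum γ) := by
    have hd : ∀ m n, ContDiff ℝ ∞ (fun t => det2 (iteratedDeriv m γ t) (iteratedDeriv n γ t)) :=
      fun m n => (hγ.contDiff_iteratedDeriv m).det2 (hγ.contDiff_iteratedDeriv n)
    unfold kappaANum det12 det13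
    rw [← iteratedDeriv_one]
    exact (((contDiff_const.mul (hd 1 2)).mul (hd 1 4)).add
      ((contDiff_const.mul (hd 1 2)).mul (hd 2 3))).sub (contDiff_const.mul ((hd 1 3).pow 2))
  exact ((hquot.pow 2).mul hnum.contDiffOn).div (contDiffOn_const.mul (habs.rpow_const_of_ne hE'))
    fun t ht => mul_ne_zero (by norm_num) (Real.rpow_pos_of_pos (abs_pos.2 (hE t ht)) _).ne'

end Curve

theorem stmt_14_general (γ : ℝ → ℝ × ℝ) (hγ : ContDiff ℝ (⊤:ℕ∞) γ)
    (hinf : HasGenericInflection γ) :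
    (∃ ε > (0:ℝ), ∃ F : ℝ → ℝ, ContDiffOn ℝ (⊤:ℕ∞) F (Set.Ioo (-ε) ε) ∧
      (∀ t ∈ Set.Ioo (-ε) ε, t ≠ 0 → F t = sA γ t ^ 2 * kappaA γ t) ∧
      F 0 = -(5/16)) ∧
    Tendsto (fun t => sA γ t ^ 2 * kappaA γ t) (𝓝[≠] (0:ℝ)) (𝓝 (-(5/16))) := by
  obtain ⟨-, h0, hc⟩ := hinf
  have hE0 : det12Div γ 0 ≠ 0 := det12Div_zero (γ := γ) ▸ hc
  obtain ⟨ε, hε, hE⟩ : ∃ ε > 0, ∀ t ∈ Ioo (-ε) ε, det12Div γ t ≠ 0 := by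
    have hcont := ((contDiffOn_det12Div hγ 1).contDiffAt
      (Ioo_mem_nhds (by norm_num) one_pos)).continuousAt
    obtain ⟨ε, hε, hball⟩ := Metric.eventually_nhds_iff.1 (hcont.eventually_ne hE0)
    exact ⟨ε, hε, fun t ht => hball (by rwa [Real.dist_eq, sub_zero, abs_lt])⟩
  have hsmooth := contDiffOn_sASqKappaA hγ hE
  have heq : ∀ t ∈ Ioo (-ε) ε, t ≠ 0 → sASqKappaA γ t = sA γ t ^ 2 * kappaA γ t :=
    fun t _ ht => sASqKappaA_eq hγ h0 ht
  have hF0 := sASqKappaA_zero h0 hc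
  refine ⟨⟨ε, hε, sASqKappaA γ, hsmooth, heq, hF0⟩, ?_⟩
  have hnhds : Ioo (-ε) ε ∈ 𝓝 (0:ℝ) := Ioo_mem_nhds (by linarith) hε
  have hcont := (hsmooth.contDiffAt hnhds).continuousAt.tendsto
  rw [hF0] at hcont
  refine (hcont.mono_left nhdsWithin_le_nhds).congr' ?_
  filter_upwards [nhdsWithin_le_nhds hnhds, self_mem_nhdsWithin] with t ht ht0
  exact heq t ht ht0

/-- At a generic inflection point, `(s_A)²·κ_A` extends to a `C^∞` function `F` at
`t = 0` with `F(0) = −5/16`; in particular `lim_{t→0} (s_A)²κ_A = −5/16`. -/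
theorem stmt_14 (γ : ℝ → ℝ × ℝ) (hγ : ContDiff ℝ (⊤:ℕ∞) γ)
    (hinf : HasGenericInflection γ)
    (hreg : ∀ᶠ t in 𝓝[≠] (0:ℝ), det2 (deriv γ t) (iteratedDeriv 2 γ t) ≠ 0) :
    (∃ ε > (0:ℝ), ∃ F : ℝ → ℝ, ContDiffOn ℝ (⊤:ℕ∞) F (Set.Ioo (-ε) ε) ∧
      (∀ t ∈ Set.Ioo (-ε) ε, t ≠ 0 → F t = sA γ t ^ 2 * kappaA γ t) ∧
      F 0 = -(5/16)) ∧
    Tendsto (fun t => sA γ t ^ 2 * kappaA γ t) (𝓝[≠] (0:ℝ)) (𝓝 (-(5/16))) :=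
  stmt_14_general γ hγ hinf
end
end

section
/- Let γ : ℝ → ℝ² be a C^∞ regular curve with a generic inflection point at t = 0, with [γ'(t), γ''(t)] ≠ 0 for t ≠ 0 near 0, and let τ(t) := sgn(t)·|s_A(t)|^{3/4}. Then lim_{t→0} (s_A(t)²·κ_A(t) + 5/16)/τ(t) = −(3·3^{1/4}/(28√2))·μ_I, where μ_I is the affine inflectional curvature of γ at t = 0. -/
noncomputable section
open Real Set Filter Topology

/-!
Write `D = [γ', γ'']`. At a generic inflection `D 0 = 0 ≠ D' 0 = c`, so `D t = t h(t)` with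
`h = dslope D 0` differentiable at `0`, and `|D|^{1/3} = q(t) |t|^{1/3}` with `q = |h|^{1/3}`
differentiable at `0`. Hence `s_A(t) = (3/4) t |t|^{1/3} S(t)`, where `S` is the mean of `q` over
`[0, t]` for the weight `|u|^{1/3}`; `S` is again differentiable at `0`, with `S 0 = q 0`.
Substituting, `s_A² κ_A + 5/16 = S² N / (16 q⁸) + 5/16 =: Φ` with `N = 9 |D|^{8/3} κ_A` smooth, and
`sgn t · |s_A|^{3/4} = t ((3/4) |S|)^{3/4}`. As `N 0 = -5 c²`, `Φ 0 = 0`, so the quotient tends to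
`Φ'(0) / ((3/4) |c|^{1/3})^{3/4}`, and `Φ'(0)` only involves `c`, `D''(0)` and `N'(0)`.
-/

open Asymptotics intervalIntegral

lemma Real.sign_mul_abs (x : ℝ) : Real.sign x * |x| = x := by
  rcases lt_trichotomy x 0 with h | rfl | h
  · rw [Real.sign_of_neg h, abs_of_neg h]; ring
  · simp
  · rw [Real.sign_of_pos h, abs_of_pos h]; ring

lemma rpow_one_third_pow_three {x : ℝ} (hx : 0 ≤ x) : (x ^ (1/3 : ℝ)) ^ 3 = x := by
  rw [← Real.rpow_mul_natCast hx]; norm_num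

lemma hasDerivAt_abs_rpow_of_ne_zero (p : ℝ) {x : ℝ} (hx : x ≠ 0) :
    HasDerivAt (fun y : ℝ => |y| ^ p) (p * |x| ^ p / x) x := by
  have hx' : |x| ≠ 0 := abs_ne_zero.mpr hx
  convert (hasDerivAt_abs hx).rpow_const (p := p) (Or.inl hx') using 1
  rw [Real.rpow_sub_one hx']
  rcases hx.lt_or_gt with h | h
  · simp [h, abs_of_neg h]; field_simp
  · simp [h, abs_of_pos h]; field_simp

lemma hasDerivAt_mul_abs_rpow {r : ℝ} (hr : 0 ≤ r) (t : ℝ) :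
    HasDerivAt (fun u : ℝ => u * |u| ^ r) ((r + 1) * |t| ^ r) t := by
  have hw : Continuous fun u : ℝ => |u| ^ r := continuous_abs.rpow_const fun _ => Or.inr hr
  refine hasDerivAt_of_hasDerivAt_of_ne' (x := 0) (f := fun u : ℝ => u * |u| ^ r)
    (g := fun u => (r + 1) * |u| ^ r) (fun u hu => ?_)
    (continuous_id.fun_mul hw).continuousAt (continuous_const.fun_mul hw).continuousAt t
  refine ((hasDerivAt_id' u).fun_mul (hasDerivAt_abs_rpow_of_ne_zero r hu)).congr_deriv ?_
  field_simp
  ring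

lemma integral_abs_rpow {r : ℝ} (hr : 0 ≤ r) (t : ℝ) :
    ∫ u in (0:ℝ)..t, |u| ^ r = t * |t| ^ r / (r + 1) := by
  have hr1 : r + 1 ≠ 0 := by positivity
  rw [integral_eq_sub_of_hasDerivAt (f := fun u => u * |u| ^ r / (r + 1))
    (fun u _ => ((hasDerivAt_mul_abs_rpow hr u).div_const _).congr_deriv (by field_simp))
    ((continuous_abs.rpow_const fun _ => Or.inr hr).intervalIntegrable _ _)]
  simp

lemma integral_mul_abs_rpow {r : ℝ} (hr : 0 ≤ r) (t : ℝ) :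
    ∫ u in (0:ℝ)..t, u * |u| ^ r = t ^ 2 * |t| ^ r / (r + 2) := by
  have hr2 : r + 2 ≠ 0 := by positivity
  have hderiv (u : ℝ) :
      HasDerivAt (fun u : ℝ => u * (u * |u| ^ r) / (r + 2)) (u * |u| ^ r) u :=
    (((hasDerivAt_id' u).fun_mul (hasDerivAt_mul_abs_rpow hr u)).div_const (r + 2)).congr_deriv
      (by field_simp; ring)
  rw [integral_eq_sub_of_hasDerivAt (fun u _ => hderiv u)
    ((continuous_id.fun_mul (continuous_abs.rpow_const fun _ => Or.inr hr)).intervalIntegrable _ _)]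
  simp only [zero_mul, zero_div, sub_zero]
  ring

lemma isLittleO_integral_of_isLittleO_mul_abs_rpow {r : ℝ} (hr : 0 ≤ r) {g : ℝ → ℝ}
    (hg : g =o[𝓝 0] fun u => u * |u| ^ r) :
    (fun t => ∫ u in (0:ℝ)..t, g u) =o[𝓝 0] fun t => t * (t * |t| ^ r) := by
  rw [isLittleO_iff] at hg ⊢
  intro ε hε
  obtain ⟨δ, hδ, hball⟩ := Metric.eventually_nhds_iff.mp (hg hε)
  filter_upwards [Metric.ball_mem_nhds 0 hδ] with t ht
  have hbound : ∀ u ∈ Set.uIoc (0:ℝ) t, ‖g u‖ ≤ ε * (|t| * |t| ^ r) := fun u hu => by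
    have hut : |u| ≤ |t| := by
      simpa using Set.abs_sub_left_of_mem_uIcc (Set.uIoc_subset_uIcc hu)
    have hu : dist u 0 < δ := by
      rw [Real.dist_eq, sub_zero]; rw [Metric.mem_ball, Real.dist_eq, sub_zero] at ht
      exact hut.trans_lt ht
    calc ‖g u‖ ≤ ε * ‖u * |u| ^ r‖ := hball hu
      _ = ε * (|u| * |u| ^ r) := by
        rw [Real.norm_eq_abs, abs_mul, abs_of_nonneg (by positivity : 0 ≤ |u| ^ r)]
      _ ≤ ε * (|t| * |t| ^ r) := by gcongr
  calc ‖∫ u in (0:ℝ)..t, g u‖ ≤ ε * (|t| * |t| ^ r) * |t - 0| :=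
        norm_integral_le_of_norm_le_const hbound
    _ = ε * ‖t * (t * |t| ^ r)‖ := by
        rw [sub_zero, Real.norm_eq_abs, abs_mul, abs_mul,
          abs_of_nonneg (by positivity : 0 ≤ |t| ^ r)]
        ring

def rpowWeightedMean (r : ℝ) (q : ℝ → ℝ) (t : ℝ) : ℝ :=
  if t = 0 then q 0 else (r + 1) * (∫ u in (0:ℝ)..t, q u * |u| ^ r) / (t * |t| ^ r)

@[simp]
lemma rpowWeightedMean_zero (r : ℝ) (q : ℝ → ℝ) : rpowWeightedMean r q 0 = q 0 := if_pos rfl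

lemma integral_mul_abs_rpow_eq {r : ℝ} (hr : 0 ≤ r) (q : ℝ → ℝ) (t : ℝ) :
    ∫ u in (0:ℝ)..t, q u * |u| ^ r = t * |t| ^ r / (r + 1) * rpowWeightedMean r q t := by
  rcases eq_or_ne t 0 with rfl | ht
  · simp
  · have : |t| ^ r ≠ 0 := (Real.rpow_pos_of_pos (abs_pos.mpr ht) r).ne'
    rw [rpowWeightedMean, if_neg ht]
    field_simp

lemma hasDerivAt_rpowWeightedMean {r b : ℝ} (hr : 0 ≤ r) {q : ℝ → ℝ} (hq : Continuous q)
    (hb : HasDerivAt q b 0) :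
    HasDerivAt (rpowWeightedMean r q) ((r + 1) / (r + 2) * b) 0 := by
  set g : ℝ → ℝ := fun u => (q u - q 0 - u * b) * |u| ^ r
  have hg : g =o[𝓝 0] fun u => u * |u| ^ r := by
    simpa using (hasDerivAt_iff_isLittleO.mp hb).mul_isBigO (isBigO_refl (fun u => |u| ^ r) _)
  have hint (t : ℝ) : ∫ u in (0:ℝ)..t, g u = (∫ u in (0:ℝ)..t, q u * |u| ^ r)
      - q 0 * (t * |t| ^ r / (r + 1)) - b * (t ^ 2 * |t| ^ r / (r + 2)) := by
    rw [← integral_abs_rpow hr, ← integral_mul_abs_rpow hr, ← integral_const_mul,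
      ← integral_const_mul, ← integral_sub, ← integral_sub]
    · congr 1; ext u; ring
    all_goals exact Continuous.intervalIntegrable (by fun_prop) _ _
  rw [hasDerivAt_iff_isLittleO]
  refine ((isBigO_const_mul_self (r + 1) (fun t : ℝ => (t * |t| ^ r)⁻¹) _).mul_isLittleO
    (isLittleO_integral_of_isLittleO_mul_abs_rpow hr hg)).congr (fun t => ?_) (fun t => ?_)
  · rcases eq_or_ne t 0 with rfl | ht
    · simp
    · have : |t| ^ r ≠ 0 := (Real.rpow_pos_of_pos (abs_pos.mpr ht) r).ne'
      simp only [rpowWeightedMean, if_neg ht, ↓reduceIte, hint, smul_eq_mul]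
      field_simp
      ring
  · rcases eq_or_ne t 0 with rfl | ht
    · simp
    · have : |t| ^ r ≠ 0 := (Real.rpow_pos_of_pos (abs_pos.mpr ht) r).ne'
      field_simp
      ring

lemma hasDerivAt_dslope_same {E : Type*} [NormedAddCommGroup E] [NormedSpace ℝ E]
    {f f' : ℝ → E} {x₀ : ℝ} {a : E} (hf : ∀ x, HasDerivAt f (f' x) x)
    (hf' : HasDerivAt f' a x₀) :
    HasDerivAt (dslope f x₀) ((2 : ℝ)⁻¹ • a) x₀ := by
  set R : ℝ → E := fun x => f x - f x₀ - (x - x₀) • f' x₀ - (2⁻¹ * (x - x₀) ^ 2) • a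
  have hR (x : ℝ) : HasDerivAt R (f' x - f' x₀ - (x - x₀) • a) x := by
    have h := (((hf x).sub_const (f x₀)).sub ((hasDerivAt_sub_const_iff x₀).2 (hasDerivAt_id' x)
      |>.smul_const (f' x₀))).sub ((((hasDerivAt_id' x).sub_const x₀).pow 2).const_mul 2⁻¹
      |>.smul_const a)
    refine h.congr_deriv ?_
    norm_num
    module
  have hRo : (fun x => R x - R x₀) =o[𝓝 x₀] fun x => (x - x₀) ^ 2 := by
    simpa using convex_univ.isLittleO_pow_succ_real (Set.mem_univ x₀) (n := 1)
      (fun x _ => (hR x).hasDerivWithinAt) (by simpa using hasDerivAt_iff_isLittleO.mp hf')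
  rw [hasDerivAt_iff_isLittleO]
  refine ((isBigO_refl (fun x => (x - x₀)⁻¹) _).smul_isLittleO hRo).congr (fun x => ?_)
    (fun x => ?_)
  · rcases eq_or_ne x x₀ with rfl | hx
    · simp
    · have hx' : x - x₀ ≠ 0 := sub_ne_zero.mpr hx
      have hcoef : (x - x₀)⁻¹ * (2⁻¹ * (x - x₀) ^ 2) = (x - x₀) * 2⁻¹ := by field_simp
      rw [dslope_of_ne _ hx, dslope_same, (hf x₀).deriv, slope_def_module]
      simp only [R, sub_self, zero_smul, smul_sub, smul_smul, inv_mul_cancel₀ hx', hcoef]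
      module
  · rcases eq_or_ne x x₀ with rfl | hx
    · simp
    · rw [smul_eq_mul]; field_simp [sub_ne_zero.mpr hx]

lemma Differentiable.continuous_dslope {𝕜 E : Type*} [NontriviallyNormedField 𝕜]
    [NormedAddCommGroup E] [NormedSpace 𝕜 E] {f : 𝕜 → E} (hf : Differentiable 𝕜 f) (a : 𝕜) :
    Continuous (dslope f a) :=
  continuous_iff_continuousAt.2 fun b => by
    rcases eq_or_ne b a with rfl | hb
    · exact continuousAt_dslope_same.2 (hf b)
    · exact (continuousAt_dslope_of_ne hb).2 (hf b).continuousAt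

def cbrtSlope (D : ℝ → ℝ) (t : ℝ) : ℝ := |dslope D 0 t| ^ (1/3 : ℝ)

section Inflection

variable {D D' N : ℝ → ℝ} {a c n : ℝ}

lemma abs_rpow_one_third_eq_cbrtSlope_mul (hD0 : D 0 = 0) (t : ℝ) :
    |D t| ^ (1/3 : ℝ) = cbrtSlope D t * |t| ^ (1/3 : ℝ) := by
  have h := sub_smul_dslope D 0 t
  rw [hD0, sub_zero, sub_zero, smul_eq_mul] at h
  rw [← h, abs_mul, Real.mul_rpow (abs_nonneg _) (abs_nonneg _), mul_comm, cbrtSlope]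

lemma cbrtSlope_zero (hD : ∀ t, HasDerivAt D (D' t) t) (hc : D' 0 = c) :
    cbrtSlope D 0 = |c| ^ (1/3 : ℝ) := by
  rw [cbrtSlope, dslope_same, (hD 0).deriv, hc]

lemma cbrtSlope_zero_pow_six (hD : ∀ t, HasDerivAt D (D' t) t) (hc : D' 0 = c) :
    cbrtSlope D 0 ^ 6 = c ^ 2 := by
  rw [cbrtSlope_zero hD hc, show 6 = 3 * 2 from rfl, pow_mul,
    rpow_one_third_pow_three (abs_nonneg c), sq_abs]

lemma cbrtSlope_zero_ne_zero (hD : ∀ t, HasDerivAt D (D' t) t) (hc : D' 0 = c) (hc0 : c ≠ 0) :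
    cbrtSlope D 0 ≠ 0 := by
  rw [cbrtSlope_zero hD hc]; positivity

lemma continuous_cbrtSlope (hD : Differentiable ℝ D) : Continuous (cbrtSlope D) :=
  (continuous_abs.rpow_const fun _ => Or.inr (by norm_num)).comp (hD.continuous_dslope 0)

lemma hasDerivAt_cbrtSlope (hD : ∀ t, HasDerivAt D (D' t) t) (hD' : HasDerivAt D' a 0)
    (hc : D' 0 = c) (hc0 : c ≠ 0) :
    HasDerivAt (cbrtSlope D) (|c| ^ (1/3 : ℝ) * a / (6 * c)) 0 := by
  have h0 : dslope D 0 0 = c := by rw [dslope_same, (hD 0).deriv, hc]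
  have h := (hasDerivAt_abs_rpow_of_ne_zero (1/3) (h0.symm ▸ hc0)).comp 0
    (hasDerivAt_dslope_same hD hD')
  rw [h0] at h
  exact h.congr_deriv (by rw [smul_eq_mul]; field_simp; ring)

/-- `s_A² κ_A + 5/16`, in a form differentiable at `0`, for `D = [γ', γ'']` and
`N = 9 |D|^{8/3} κ_A`. -/
def inflectionRemainder (D N : ℝ → ℝ) (t : ℝ) : ℝ :=
  rpowWeightedMean (1/3) (cbrtSlope D) t ^ 2 * N t / (16 * cbrtSlope D t ^ 8) + 5 / 16

lemma inflectionRemainder_zero (hD : ∀ t, HasDerivAt D (D' t) t) (hc : D' 0 = c) (hc0 : c ≠ 0)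
    (hN0 : N 0 = -5 * c ^ 2) : inflectionRemainder D N 0 = 0 := by
  have hw6 := cbrtSlope_zero_pow_six hD hc
  have hw0 := cbrtSlope_zero_ne_zero hD hc hc0
  rw [inflectionRemainder, rpowWeightedMean_zero, hN0]
  field_simp
  linear_combination 5 * hw6

lemma hasDerivAt_inflectionRemainder (hD : ∀ t, HasDerivAt D (D' t) t)
    (hD' : HasDerivAt D' a 0) (hc : D' 0 = c) (hc0 : c ≠ 0) (hN : HasDerivAt N n 0)
    (hN0 : N 0 = -5 * c ^ 2) :
    HasDerivAt (inflectionRemainder D N) (n / (16 * c ^ 2) + 5 * a / (14 * c)) 0 := by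
  have hq := hasDerivAt_cbrtSlope hD hD' hc hc0
  have hS := hasDerivAt_rpowWeightedMean (r := 1/3) (by norm_num)
    (continuous_cbrtSlope fun t => (hD t).differentiableAt) hq
  have hw0 := cbrtSlope_zero_ne_zero hD hc hc0
  have h := (((hS.fun_pow 2).fun_mul hN).fun_div ((hq.fun_pow 8).const_mul 16)
    (by positivity)).add_const (5 / 16)
  refine h.congr_deriv ?_
  rw [rpowWeightedMean_zero, hN0, ← cbrtSlope_zero hD hc]
  have hw6 := cbrtSlope_zero_pow_six hD hc
  field_simp
  norm_num
  linear_combination (-(cbrtSlope D 0 ^ 7) * (588 * n + 3360 * a * c)) * hw6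

lemma integral_abs_rpow_one_third_eq (hD0 : D 0 = 0) (t : ℝ) :
    ∫ u in (0:ℝ)..t, |D u| ^ (1/3 : ℝ)
      = 3 / 4 * (t * |t| ^ (1/3 : ℝ)) * rpowWeightedMean (1/3) (cbrtSlope D) t := by
  simp_rw [abs_rpow_one_third_eq_cbrtSlope_mul hD0]
  rw [integral_mul_abs_rpow_eq (by norm_num)]
  ring

lemma sq_integral_mul_div_add_eq_inflectionRemainder (hD0 : D 0 = 0) {t : ℝ} (ht : t ≠ 0) :
    (∫ u in (0:ℝ)..t, |D u| ^ (1/3 : ℝ)) ^ 2 * (N t / (9 * |D t| ^ (8/3 : ℝ))) + 5 / 16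
      = inflectionRemainder D N t := by
  have hD83 : |D t| ^ (8/3 : ℝ) = (cbrtSlope D t * |t| ^ (1/3 : ℝ)) ^ 8 := by
    rw [← abs_rpow_one_third_eq_cbrtSlope_mul hD0, ← Real.rpow_mul_natCast (abs_nonneg _)]
    norm_num
  have hw6 : (|t| ^ (1/3 : ℝ)) ^ 6 = t ^ 2 := by
    rw [show 6 = 3 * 2 from rfl, pow_mul, rpow_one_third_pow_three (abs_nonneg t), sq_abs]
  have hw0 : |t| ^ (1/3 : ℝ) ≠ 0 := by positivity
  rw [integral_abs_rpow_one_third_eq hD0, hD83, inflectionRemainder]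
  rcases eq_or_ne (cbrtSlope D t) 0 with hq | hq
  · simp [hq]
  · field_simp
    linear_combination (-144 * rpowWeightedMean (1/3) (cbrtSlope D) t ^ 2 * N t) * hw6

lemma sign_mul_abs_integral_abs_rpow_one_third (hD0 : D 0 = 0) (t : ℝ) :
    Real.sign t * |∫ u in (0:ℝ)..t, |D u| ^ (1/3 : ℝ)| ^ (3/4 : ℝ)
      = t * (3 / 4 * |rpowWeightedMean (1/3) (cbrtSlope D) t|) ^ (3/4 : ℝ) := by
  have h43 : |t| * |t| ^ (1/3 : ℝ) = |t| ^ (4/3 : ℝ) := by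
    rw [← Real.rpow_one_add' (abs_nonneg t) (by norm_num)]; norm_num
  rw [integral_abs_rpow_one_third_eq hD0, abs_mul, abs_mul, abs_mul,
    abs_of_nonneg (by positivity : (0:ℝ) ≤ |t| ^ (1/3 : ℝ)), h43,
    abs_of_pos (by norm_num : (0:ℝ) < 3 / 4), mul_right_comm,
    Real.mul_rpow (by positivity) (by positivity), ← Real.rpow_mul (abs_nonneg t)]
  norm_num
  rw [mul_comm _ |t|, ← mul_assoc, Real.sign_mul_abs]

theorem tendsto_inflectionQuotient (hD : ∀ t, HasDerivAt D (D' t) t) (hD' : HasDerivAt D' a 0)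
    (hD0 : D 0 = 0) (hc : D' 0 = c) (hc0 : c ≠ 0) (hN : HasDerivAt N n 0)
    (hN0 : N 0 = -5 * c ^ 2) :
    Tendsto (fun t => ((∫ u in (0:ℝ)..t, |D u| ^ (1/3 : ℝ)) ^ 2 * (N t / (9 * |D t| ^ (8/3 : ℝ)))
        + 5 / 16) / (Real.sign t * |∫ u in (0:ℝ)..t, |D u| ^ (1/3 : ℝ)| ^ (3/4 : ℝ)))
      (𝓝[≠] 0)
      (𝓝 ((n / (16 * c ^ 2) + 5 * a / (14 * c)) / (3 / 4 * |c| ^ (1/3 : ℝ)) ^ (3/4 : ℝ))) := by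
  have hslope : Tendsto (fun t => inflectionRemainder D N t / t) (𝓝[≠] 0)
      (𝓝 (n / (16 * c ^ 2) + 5 * a / (14 * c))) := by
    refine (hasDerivAt_iff_tendsto_slope.mp
      (hasDerivAt_inflectionRemainder hD hD' hc hc0 hN hN0)).congr fun t => ?_
    rw [slope_def_field, inflectionRemainder_zero hD hc hc0 hN0, sub_zero, sub_zero]
  have hmean : Tendsto (fun t => (3 / 4 * |rpowWeightedMean (1/3) (cbrtSlope D) t|) ^ (3/4 : ℝ))
      (𝓝[≠] 0) (𝓝 ((3 / 4 * |c| ^ (1/3 : ℝ)) ^ (3/4 : ℝ))) := by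
    have h := (hasDerivAt_rpowWeightedMean (r := 1/3) (by norm_num)
      (continuous_cbrtSlope fun t => (hD t).differentiableAt)
      (hasDerivAt_cbrtSlope hD hD' hc hc0)).continuousAt.tendsto
    rw [rpowWeightedMean_zero, cbrtSlope_zero hD hc] at h
    rw [← abs_of_nonneg (by positivity : (0:ℝ) ≤ |c| ^ (1/3 : ℝ))]
    exact ((h.abs.const_mul (3 / 4)).rpow_const (p := 3 / 4) (Or.inr (by norm_num))).mono_left
      nhdsWithin_le_nhds
  refine (hslope.div hmean (by positivity)).congr' ?_
  filter_upwards [self_mem_nhdsWithin] with t ht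
  rw [sq_integral_mul_div_add_eq_inflectionRemainder hD0 ht,
    sign_mul_abs_integral_abs_rpow_one_third hD0, Pi.div_apply, div_div]

end Inflection

lemma inflectionQuotient_limit_eq {c e f : ℝ} (hc : c ≠ 0) :
    (c * (2 * f - 7 * e) / (16 * c ^ 2) + 5 * (f + e) / (14 * c))
        / (3 / 4 * |c| ^ (1/3 : ℝ)) ^ (3/4 : ℝ)
      = -(3 * (3:ℝ) ^ ((1:ℝ)/4) / (28 * Real.sqrt 2))
          * (Real.sign c * (e - 6 * f) / |c| ^ ((5:ℝ)/4)) := by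
  set A := |c| ^ (1/4 : ℝ) with hA
  set B := (3:ℝ) ^ (1/4 : ℝ) with hB
  have hA0 : A ≠ 0 := by positivity
  have hB0 : B ≠ 0 := by positivity
  have hB4 : B ^ 4 = 3 := by rw [hB, ← Real.rpow_mul_natCast (by norm_num)]; norm_num
  have hA5 : |c| ^ (5/4 : ℝ) = A ^ 5 := by
    rw [hA, ← Real.rpow_mul_natCast (abs_nonneg c)]; norm_num
  have hcA : c = Real.sign c * A ^ 4 := by
    rw [hA, ← Real.rpow_mul_natCast (abs_nonneg c)]; norm_num; exact (Real.sign_mul_abs c).symm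
  have hs : Real.sign c ^ 2 = 1 := by
    rcases Real.sign_apply_eq_of_ne_zero c hc with h | h <;> simp [h]
  have h2 : √2 ^ 2 = 2 := Real.sq_sqrt (by norm_num)
  have h4 : (4:ℝ) ^ (3/4 : ℝ) = 2 * √2 := by
    rw [show (4:ℝ) = 2 ^ (2:ℝ) by norm_num, ← Real.rpow_mul (by norm_num), Real.sqrt_eq_rpow,
      ← Real.rpow_one_add' (by norm_num) (by norm_num)]
    norm_num
  have hden : (3 / 4 * |c| ^ (1/3 : ℝ)) ^ (3/4 : ℝ) = B ^ 3 / (2 * √2) * A := by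
    rw [Real.mul_rpow (by norm_num) (by positivity), ← Real.rpow_mul (abs_nonneg c),
      Real.div_rpow (by norm_num) (by norm_num), h4, hB, ← Real.rpow_mul_natCast (by norm_num)]
    norm_num
    exact hA.symm
  rw [hden, hA5]
  field_simp
  linear_combination (-1008 * (e - 6 * f) * A ^ 4) * h2
    + (672 * c * Real.sign c * (e - 6 * f)) * hB4
    + (2016 * (e - 6 * f) * Real.sign c) * hcA + (2016 * (e - 6 * f) * A ^ 4) * hs

lemma hasDerivAt_det2 {f g : ℝ → ℝ × ℝ} {f' g' : ℝ × ℝ} {t : ℝ}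
    (hf : HasDerivAt f f' t) (hg : HasDerivAt g g' t) :
    HasDerivAt (fun u => det2 (f u) (g u)) (det2 f' (g t) + det2 (f t) g') t := by
  have h1 (φ : ℝ → ℝ × ℝ) (φ' : ℝ × ℝ) (hφ : HasDerivAt φ φ' t) :
      HasDerivAt (fun u => (φ u).1) φ'.1 t := by exact hasFDerivAt_fst.comp_hasDerivAt t hφ
  have h2 (φ : ℝ → ℝ × ℝ) (φ' : ℝ × ℝ) (hφ : HasDerivAt φ φ' t) :
      HasDerivAt (fun u => (φ u).2) φ'.2 t := by exact hasFDerivAt_snd.comp_hasDerivAt t hφ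
  refine (((h1 f f' hf).fun_mul (h2 g g' hg)).sub
    ((h2 f f' hf).fun_mul (h1 g g' hg))).congr_deriv ?_
  simp only [det2]
  ring

def bracket (γ : ℝ → ℝ × ℝ) (i j : ℕ) (t : ℝ) : ℝ :=
  det2 (iteratedDeriv i γ t) (iteratedDeriv j γ t)

lemma bracket_self (γ : ℝ → ℝ × ℝ) (i : ℕ) (t : ℝ) : bracket γ i i t = 0 := by
  simp [bracket, det2, mul_comm]

lemma hasDerivAt_bracket {γ : ℝ → ℝ × ℝ} {n : ℕ} (hγ : ContDiff ℝ n γ) {i j : ℕ} (hi : i < n)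
    (hj : j < n) (t : ℝ) :
    HasDerivAt (bracket γ i j) (bracket γ (i + 1) j t + bracket γ i (j + 1) t) t := by
  have hd {k : ℕ} (hk : k < n) :
      HasDerivAt (iteratedDeriv k γ) (iteratedDeriv (k + 1) γ t) t := by
    rw [iteratedDeriv_succ]
    exact (hγ.differentiable_iteratedDeriv k (by exact_mod_cast hk) t).hasDerivAt
  exact hasDerivAt_det2 (hd hi) (hd hj)

lemma hasDerivAt_bracket_one_two {γ : ℝ → ℝ × ℝ} (hγ : ContDiff ℝ 5 γ) (t : ℝ) :
    HasDerivAt (bracket γ 1 2) (bracket γ 1 3 t) t := by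
  simpa [bracket_self] using hasDerivAt_bracket hγ (i := 1) (j := 2) (by norm_num) (by norm_num) t

lemma hasDerivAt_kappaA_numerator {γ : ℝ → ℝ × ℝ} (hγ : ContDiff ℝ 5 γ)
    (h12 : bracket γ 1 2 0 = 0) :
    HasDerivAt (fun t => 3 * bracket γ 1 2 t * bracket γ 1 4 t
        + 12 * bracket γ 1 2 t * bracket γ 2 3 t - 5 * bracket γ 1 3 t ^ 2)
      (bracket γ 1 3 0 * (2 * bracket γ 2 3 0 - 7 * bracket γ 1 4 0)) 0 := by
  have hD := hasDerivAt_bracket_one_two hγ 0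
  refine ((((hD.const_mul 3).fun_mul (hasDerivAt_bracket hγ (i := 1) (j := 4) (by norm_num)
    (by norm_num) 0)).add ((hD.const_mul 12).fun_mul (hasDerivAt_bracket hγ (i := 2) (j := 3)
    (by norm_num) (by norm_num) 0))).sub (((hasDerivAt_bracket hγ (i := 1) (j := 3) (by norm_num)
    (by norm_num) 0).fun_pow 2).const_mul 5)).congr_deriv ?_
  simp only [bracket_self, h12]
  ring

theorem stmt_15_general (γ : ℝ → ℝ × ℝ) (hγ : ContDiff ℝ (⊤:ℕ∞) γ)
    (hinf : HasGenericInflection γ) :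
    Tendsto (fun t => (sA γ t ^ 2 * kappaA γ t + 5/16)
        / (Real.sign t * |sA γ t| ^ ((3:ℝ)/4)))
      (𝓝[≠] (0:ℝ))
      (𝓝 (-(3 * (3:ℝ) ^ ((1:ℝ)/4) / (28 * Real.sqrt 2)) * muI γ)) := by
  obtain ⟨-, h12, h13⟩ := hinf
  replace h12 : bracket γ 1 2 0 = 0 := by rwa [bracket, iteratedDeriv_one]
  replace h13 : bracket γ 1 3 0 ≠ 0 := by rwa [bracket, iteratedDeriv_one]
  have hγ5 : ContDiff ℝ 5 γ := hγ.of_le (WithTop.coe_le_coe.mpr le_top)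
  have hD' : HasDerivAt (bracket γ 1 3) (bracket γ 2 3 0 + bracket γ 1 4 0) 0 :=
    hasDerivAt_bracket hγ5 (by norm_num) (by norm_num) 0
  have key := tendsto_inflectionQuotient (hasDerivAt_bracket_one_two hγ5) hD' h12 rfl h13
    (hasDerivAt_kappaA_numerator hγ5 h12) (by simp [h12])
  rw [inflectionQuotient_limit_eq h13] at key
  simpa only [sA, kappaA, muI, bracket, iteratedDeriv_one] using key

/-- At a generic inflection point,
`lim_{t→0} ((s_A)²κ_A + 5/16)/τ = −(3·⁴√3/(28√2))·μ_I`,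
where `τ = sgn(t)·|s_A(t)|^{3/4}`. -/
theorem stmt_15 (γ : ℝ → ℝ × ℝ) (hγ : ContDiff ℝ (⊤:ℕ∞) γ)
    (hinf : HasGenericInflection γ)
    (hreg : ∀ᶠ t in 𝓝[≠] (0:ℝ), det2 (deriv γ t) (iteratedDeriv 2 γ t) ≠ 0) :
    Tendsto (fun t => (sA γ t ^ 2 * kappaA γ t + 5/16)
        / (Real.sign t * |sA γ t| ^ ((3:ℝ)/4)))
      (𝓝[≠] (0:ℝ))
      (𝓝 (-(3 * (3:ℝ) ^ ((1:ℝ)/4) / (28 * Real.sqrt 2)) * muI γ)) :=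
  stmt_15_general γ hγ hinf
end
end
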